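/- (Robertson–Schrödinger uncertainty relation.) Let E be a complex Hilbert space, A and B self-adjoint continuous linear operators on E, and ψ ∈ E a unit vector. Let a = Re⟪ψ, A ψ⟫ and b = Re⟪ψ, B ψ⟫ be the expectation values, and define the variances (ΔA)² = ‖A ψ − a•ψ‖² and (ΔB)² = ‖B ψ − b•ψ‖². Then (ΔA)²·(ΔB)² ≥ (½·Re⟪ψ, i(BA − AB) ψ⟫)² + (½·Re⟪ψ, ((A − a)(B − b) + (B − b)(A − a)) ψ⟫)², where (A − a) denotes A − a•1 and (B − b) denotes B − b•1. -/

import Mathlib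

/-! With `S = A - a` and `T = B - b`, which are self-adjoint for every real `a`, `b`, put
`z = ⟪Sψ, Tψ⟫`. Self-adjointness turns the anticommutator term into `2 Re z` and, since the
commutator `[B, A] = [T, S]` does not see the shifts, the commutator term into `2 Im z`. The
inequality is then `|z|² ≤ ‖Sψ‖² ‖Tψ‖²`, i.e. Cauchy–Schwarz. -/

open ContinuousLinearMap Complex
open scoped InnerProductSpace

section

variable {E : Type*} [NormedAddCommGroup E] [InnerProductSpace ℂ E]

theorem sq_re_add_sq_im_inner_le (u v : E) :
    (⟪u, v⟫_ℂ).re ^ 2 + (⟪u, v⟫_ℂ).im ^ 2 ≤ ‖u‖ ^ 2 * ‖v‖ ^ 2 := by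
  rw [← mul_pow, sq, sq, ← normSq_apply, ← Complex.sq_norm]
  gcongr
  exact norm_inner_le_norm u v

namespace ContinuousLinearMap

theorem comp_sub_smul_one_sub_comm (A B : E →L[ℂ] E) (a b : ℂ) :
    (B - b • 1).comp (A - a • 1) - (A - a • 1).comp (B - b • 1) = B.comp A - A.comp B := by
  ext x
  simp only [sub_apply, comp_apply, smul_apply, one_apply_eq_self, map_sub, map_smul]
  module

theorem inner_comp_apply_of_isSymmetric {S : E →L[ℂ] E} (hS : (S : E →ₗ[ℂ] E).IsSymmetric)
    (T : E →L[ℂ] E) (ψ : E) : ⟪ψ, (S.comp T) ψ⟫_ℂ = ⟪S ψ, T ψ⟫_ℂ :=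
  (hS ψ (T ψ)).symm

variable {S T : E →L[ℂ] E} (hS : (S : E →ₗ[ℂ] E).IsSymmetric) (hT : (T : E →ₗ[ℂ] E).IsSymmetric)
include hS hT

theorem re_inner_anticommutator (ψ : E) :
    (⟪ψ, (S.comp T + T.comp S) ψ⟫_ℂ).re = 2 * (⟪S ψ, T ψ⟫_ℂ).re := by
  rw [add_apply, inner_add_right, inner_comp_apply_of_isSymmetric hS,
    inner_comp_apply_of_isSymmetric hT, ← inner_conj_symm (T ψ), add_re, conj_re]
  ring

theorem re_inner_I_smul_commutator (ψ : E) :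
    (⟪ψ, (I • (T.comp S - S.comp T)) ψ⟫_ℂ).re = 2 * (⟪S ψ, T ψ⟫_ℂ).im := by
  rw [smul_apply, inner_smul_right, sub_apply, inner_sub_right,
    inner_comp_apply_of_isSymmetric hS, inner_comp_apply_of_isSymmetric hT, ← inner_conj_symm (T ψ)]
  simp only [mul_re, I_re, I_im, sub_re, sub_im, conj_re, conj_im]
  ring

theorem robertson_schroedinger_of_isSymmetric (ψ : E) :
    ((1 / 2 : ℝ) * (⟪ψ, (I • (T.comp S - S.comp T)) ψ⟫_ℂ).re) ^ 2 +
      ((1 / 2 : ℝ) * (⟪ψ, (S.comp T + T.comp S) ψ⟫_ℂ).re) ^ 2 ≤ ‖S ψ‖ ^ 2 * ‖T ψ‖ ^ 2 := by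
  rw [re_inner_I_smul_commutator hS hT, re_inner_anticommutator hS hT]
  calc _ = (⟪S ψ, T ψ⟫_ℂ).re ^ 2 + (⟪S ψ, T ψ⟫_ℂ).im ^ 2 := by ring
    _ ≤ _ := sq_re_add_sq_im_inner_le _ _

end ContinuousLinearMap

end

theorem robertson_schroedinger_uncertainty_general {E : Type*} [NormedAddCommGroup E]
    [InnerProductSpace ℂ E] [CompleteSpace E]
    (A B : E →L[ℂ] E)
    (hA : ContinuousLinearMap.adjoint A = A)
    (hB : ContinuousLinearMap.adjoint B = B)
    (ψ : E)
    (a b : ℝ) :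
    ‖A ψ - (a : ℂ) • ψ‖ ^ 2 * ‖B ψ - (b : ℂ) • ψ‖ ^ 2 ≥
      ((1 / 2 : ℝ) * (inner ℂ ψ (((Complex.I : ℂ) • (B.comp A - A.comp B)) ψ) : ℂ).re) ^ 2 +
      ((1 / 2 : ℝ) * (inner ℂ ψ
        ((((A - (a : ℂ) • 1).comp (B - (b : ℂ) • 1) +
          (B - (b : ℂ) • 1).comp (A - (a : ℂ) • 1) : E →L[ℂ] E)) ψ) : ℂ).re) ^ 2 := by
  have hS : ((A - (a : ℂ) • 1 : E →L[ℂ] E) : E →ₗ[ℂ] E).IsSymmetric :=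
    ((isSelfAdjoint_iff'.mpr hA).sub (IsSelfAdjoint.smul (conj_ofReal a) (.one _))).isSymmetric
  have hT : ((B - (b : ℂ) • 1 : E →L[ℂ] E) : E →ₗ[ℂ] E).IsSymmetric :=
    ((isSelfAdjoint_iff'.mpr hB).sub (IsSelfAdjoint.smul (conj_ofReal b) (.one _))).isSymmetric
  have hSψ : (A - (a : ℂ) • 1) ψ = A ψ - (a : ℂ) • ψ := rfl
  have hTψ : (B - (b : ℂ) • 1) ψ = B ψ - (b : ℂ) • ψ := rfl
  rw [ge_iff_le, ← hSψ, ← hTψ, ← comp_sub_smul_one_sub_comm A B a b]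
  exact robertson_schroedinger_of_isSymmetric hS hT ψ

/-- Robertson–Schrödinger uncertainty relation: for self-adjoint `A, B` and a unit state
`ψ`, with expectation values `a, b` and variances `(ΔA)² = ‖Aψ − a•ψ‖²`,
`(ΔB)² = ‖Bψ − b•ψ‖²`, one has
`(ΔA)²(ΔB)² ≥ (½ Re⟪ψ, i(BA − AB)ψ⟫)² + (½ Re⟪ψ, ((A−a)(B−b) + (B−b)(A−a))ψ⟫)²`. -/
theorem robertson_schroedinger_uncertainty {E : Type*} [NormedAddCommGroup E]
    [InnerProductSpace ℂ E] [CompleteSpace E]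
    (A B : E →L[ℂ] E)
    (hA : ContinuousLinearMap.adjoint A = A)
    (hB : ContinuousLinearMap.adjoint B = B)
    (ψ : E) (hψ : ‖ψ‖ = 1)
    (a b : ℝ)
    (ha : a = (inner ℂ ψ (A ψ) : ℂ).re)
    (hb : b = (inner ℂ ψ (B ψ) : ℂ).re) :
    ‖A ψ - (a : ℂ) • ψ‖ ^ 2 * ‖B ψ - (b : ℂ) • ψ‖ ^ 2 ≥
      ((1 / 2 : ℝ) * (inner ℂ ψ (((Complex.I : ℂ) • (B.comp A - A.comp B)) ψ) : ℂ).re) ^ 2 +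
      ((1 / 2 : ℝ) * (inner ℂ ψ
        ((((A - (a : ℂ) • 1).comp (B - (b : ℂ) • 1) +
          (B - (b : ℂ) • 1).comp (A - (a : ℂ) • 1) : E →L[ℂ] E)) ψ) : ℂ).re) ^ 2 :=
  robertson_schroedinger_uncertainty_general A B hA hB ψ a b
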